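/- Let (h, [·,·]_h, B_h, ρ, λ, ω_δ) be a δ-context of generalized double extension of a quadratic Lie super algebra (h, B_h) of degree δ by a Lie super algebra (a, [·,·]_a). Then the maps χ_δ(x,u)(P_δ(y)) = -(-1)^{|u||y|} B_h(λ(x,y), u) and Φ_δ(u,v)(P_δ(x)) = (-1)^{|x|(|u|+|v|)} B_h(ρ(x)(u), v) satisfy: Φ_δ(ρ(x)(u), v) + (-1)^{|x||u|} Φ_δ(u, ρ(x)(v)) - ad*_δ(x)(Φ_δ(u,v)) - χ_δ(x, [u,v]_h) = 0, for all homogeneous x ∈ a and u, v ∈ h. -/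

import Mathlib

/-- The sign `(-1)^{ij}` for `i j : ZMod 2`. -/
def sgn (F : Type*) [Field F] (i j : ZMod 2) : F := (-1) ^ (i * j).val

/-- The `ZMod 2`-grading of the dual `V*`:
`(V*)_η = {f : f(V_ζ) = 0 for ζ ≠ η}`. -/
def dualGrade {F V : Type*} [Field F] [AddCommGroup V] [Module F V]
    (gV : ZMod 2 → Submodule F V) (η : ZMod 2) : Submodule F (Module.Dual F V) where
  carrier := {f | ∀ ζ : ZMod 2, ζ ≠ η → ∀ v ∈ gV ζ, f v = 0}
  add_mem' := by
    intro f f' hf hf' ζ hζ v hv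
    simp [hf ζ hζ v hv, hf' ζ hζ v hv]
  zero_mem' := by
    intro ζ hζ v hv
    simp
  smul_mem' := by
    intro c f hf ζ hζ v hv
    simp [hf ζ hζ v hv]


lemma neg_one_pow_val_add (F : Type*) [Field F] (a b : ZMod 2) :
    ((-1 : F)) ^ ((a + b).val) = (-1) ^ a.val * (-1) ^ b.val := by
  rw [ZMod.val_add, ← pow_add]; exact (neg_one_pow_eq_pow_mod_two _).symm

lemma sgn_sq (F : Type*) [Field F] (i j : ZMod 2) : sgn F i j * sgn F i j = 1 := by
  unfold sgn
  rw [← pow_add]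
  exact Even.neg_one_pow ⟨(i * j).val, rfl⟩

lemma sgn_comm (F : Type*) [Field F] (i j : ZMod 2) : sgn F i j = sgn F j i := by
  unfold sgn; rw [mul_comm]

lemma sgn_add_right (F : Type*) [Field F] (i j k : ZMod 2) :
    sgn F i (j + k) = sgn F i j * sgn F i k := by
  unfold sgn; rw [mul_add, neg_one_pow_val_add]

lemma sgn_add_left (F : Type*) [Field F] (i j k : ZMod 2) :
    sgn F (i + j) k = sgn F i k * sgn F j k := by
  unfold sgn; rw [add_mul, neg_one_pow_val_add]

/-- Lemma, identity (1.13): in a δ-context of generalized double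
extension of `(h, B_h)` by `(a, [·,·]_a)`, the maps
`χ_δ(x,u)(P_δ y) = -(-1)^{|u||y|} B_h(λ(x,y), u)` and
`Φ_δ(u,v)(P_δ x) = (-1)^{|x|(|u|+|v|)} B_h(ρ(x)(u), v)` satisfy
`Φ_δ(ρ(x)u, v) + (-1)^{|x||u|} Φ_δ(u, ρ(x)v) - ad*_δ(x)(Φ_δ(u,v)) - χ_δ(x,[u,v]_h) = 0`,
stated here by evaluating the functional identity at an arbitrary homogeneous
`P_δ(z)`, `z ∈ a`. -/
theorem context_identity_one
    (F A H : Type*) [Field F]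
    [AddCommGroup A] [Module F A] [AddCommGroup H] [Module F H]
    [FiniteDimensional F A] [FiniteDimensional F H]
    (gA : ZMod 2 → Submodule F A) (gH : ZMod 2 → Submodule F H)
    (hgA : DirectSum.IsInternal gA) (hgH : DirectSum.IsInternal gH)
    (brA : A →ₗ[F] A →ₗ[F] A) (brH : H →ₗ[F] H →ₗ[F] H)
    -- `(a, [·,·]_a)` is a Lie super algebra
    (hbrA_even : ∀ i j : ZMod 2, ∀ x y : A, x ∈ gA i → y ∈ gA j → brA x y ∈ gA (i + j))
    (hbrA_skew : ∀ i j : ZMod 2, ∀ x y : A, x ∈ gA i → y ∈ gA j →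
      brA x y = -(sgn F i j) • brA y x)
    (hbrA_jac : ∀ i j k : ZMod 2, ∀ x y z : A, x ∈ gA i → y ∈ gA j → z ∈ gA k →
      sgn F i k • brA x (brA y z) + sgn F j i • brA y (brA z x)
        + sgn F k j • brA z (brA x y) = 0)
    -- `(h, [·,·]_h)` is a Lie super algebra
    (hbrH_even : ∀ i j : ZMod 2, ∀ u v : H, u ∈ gH i → v ∈ gH j → brH u v ∈ gH (i + j))
    (hbrH_skew : ∀ i j : ZMod 2, ∀ u v : H, u ∈ gH i → v ∈ gH j →
      brH u v = -(sgn F i j) • brH v u)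
    (hbrH_jac : ∀ i j k : ZMod 2, ∀ u v w : H, u ∈ gH i → v ∈ gH j → w ∈ gH k →
      sgn F i k • brH u (brH v w) + sgn F j i • brH v (brH w u)
        + sgn F k j • brH w (brH u v) = 0)
    -- `B_h` is an invariant metric on `h` of degree `δ`
    (δ : ZMod 2) (Bh : H →ₗ[F] H →ₗ[F] F)
    (hBh_symm : ∀ i j : ZMod 2, ∀ u v : H, u ∈ gH i → v ∈ gH j →
      Bh u v = sgn F i j * Bh v u)
    (hBh_inv : ∀ u v w : H, Bh (brH u v) w = Bh u (brH v w))
    (hBh_nd : ∀ u : H, (∀ v : H, Bh u v = 0) → u = 0)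
    (hBh_deg : ∀ i j : ZMod 2, ∀ u v : H, u ∈ gH i → v ∈ gH j → i + j ≠ δ → Bh u v = 0)
    -- `ρ : a → Der(h) ∩ o(B_h)` even linear
    (rho : A →ₗ[F] H →ₗ[F] H)
    (hrho_even : ∀ i j : ZMod 2, ∀ x : A, ∀ u : H, x ∈ gA i → u ∈ gH j →
      rho x u ∈ gH (i + j))
    (hrho_der : ∀ i j : ZMod 2, ∀ x : A, ∀ u v : H, x ∈ gA i → u ∈ gH j →
      rho x (brH u v) = brH (rho x u) v + sgn F i j • brH u (rho x v))
    (hrho_skew : ∀ i j : ZMod 2, ∀ x : A, ∀ u v : H, x ∈ gA i → u ∈ gH j →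
      Bh (rho x u) v = -(sgn F i j) * Bh u (rho x v))
    -- `λ : a × a → h` even super skew-symmetric
    (lam : A →ₗ[F] A →ₗ[F] H)
    (hlam_even : ∀ i j : ZMod 2, ∀ x y : A, x ∈ gA i → y ∈ gA j → lam x y ∈ gH (i + j))
    (hlam_skew : ∀ i j : ZMod 2, ∀ x y : A, x ∈ gA i → y ∈ gA j →
      lam x y = -(sgn F i j) • lam y x)
    -- `[ρ(x),ρ(y)] - ρ([x,y]_a) = ad_h(λ(x,y))`
    (hdeh1 : ∀ i j : ZMod 2, ∀ x y : A, ∀ u : H, x ∈ gA i → y ∈ gA j →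
      rho x (rho y u) - sgn F i j • rho y (rho x u) - rho (brA x y) u
        = brH (lam x y) u)
    -- `Σ_cyclic (-1)^{|z||x|}(ρ(x)(λ(y,z)) + λ(x,[y,z]_a)) = 0`
    (hdeh2 : ∀ i j k : ZMod 2, ∀ x y z : A, x ∈ gA i → y ∈ gA j → z ∈ gA k →
      sgn F k i • (rho x (lam y z) + lam x (brA y z))
        + sgn F i j • (rho y (lam z x) + lam y (brA z x))
        + sgn F j k • (rho z (lam x y) + lam z (brA x y)) = 0)
    -- `ω_δ : a × a → P_δ(a)*`, even, super skew-symmetric, with the super cyclic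
    -- condition and the cocycle-type identity (`P_δ(a)*_η = (a*)_{η+δ}`)
    (ω : A →ₗ[F] A →ₗ[F] Module.Dual F A)
    (hω_even : ∀ i j : ZMod 2, ∀ x y : A, x ∈ gA i → y ∈ gA j →
      ω x y ∈ dualGrade gA (i + j + δ))
    (hω_skew : ∀ i j : ZMod 2, ∀ x y : A, x ∈ gA i → y ∈ gA j →
      ω x y = -(sgn F i j) • ω y x)
    (hω_cyc : ∀ i j k : ZMod 2, ∀ x y z : A, x ∈ gA i → y ∈ gA j → z ∈ gA k →
      (ω x y) z = sgn F i (j + k) * (ω y z) x)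
    (hω_cocycle : ∀ i j k dw : ZMod 2, ∀ x y z w : A,
      x ∈ gA i → y ∈ gA j → z ∈ gA k → w ∈ gA dw →
      sgn F k i * (-(sgn F (j + k) i) * (ω y z) (brA x w) + (ω x (brA y z)) w
          + (-(sgn F (j + k) dw)) * Bh (lam x w) (lam y z))
        + sgn F i j * (-(sgn F (k + i) j) * (ω z x) (brA y w) + (ω y (brA z x)) w
          + (-(sgn F (k + i) dw)) * Bh (lam y w) (lam z x))
        + sgn F j k * (-(sgn F (i + j) k) * (ω x y) (brA z w) + (ω z (brA x y)) w
          + (-(sgn F (i + j) dw)) * Bh (lam z w) (lam x y)) = 0)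
    (a du dv c : ZMod 2) (x z : A) (u v : H)
    (hx : x ∈ gA a) (hu : u ∈ gH du) (hv : v ∈ gH dv) (hz : z ∈ gA c) :
    sgn F c ((a + du) + dv) * Bh (rho z (rho x u)) v
      + sgn F a du * (sgn F c (du + (a + dv)) * Bh (rho z u) (rho x v))
      + sgn F (du + dv) a * (sgn F (a + c) (du + dv) * Bh (rho (brA x z) u) v)
      + sgn F (du + dv) c * Bh (lam x z) (brH u v) = 0 := by
  
  have hru : rho z u ∈ gH (c + du) := hrho_even c du z u hz hu
  have hskew := hrho_skew a (c + du) x (rho z u) v hx hru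
  have h2 : Bh (rho z u) (rho x v) = -(sgn F a (c + du)) * Bh (rho x (rho z u)) v := by
    linear_combination (sgn F a (c + du)) * hskew
      + (-(Bh (rho z u) (rho x v))) * (sgn_sq F a (c + du))
  have h1 := hdeh1 a c x z u hx hz
  have h4 : Bh (lam x z) (brH u v)
      = Bh (rho x (rho z u)) v - sgn F a c * Bh (rho z (rho x u)) v
        - Bh (rho (brA x z) u) v := by
    rw [← hBh_inv, ← h1]
    simp [map_sub, map_smul, LinearMap.sub_apply, LinearMap.smul_apply, smul_eq_mul]
  rw [h4, h2]
  simp only [sgn_add_right, sgn_add_left]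
  rw [sgn_comm F c a, sgn_comm F du a, sgn_comm F dv a, sgn_comm F du c, sgn_comm F dv c]
  linear_combination
    (-(sgn F c du * sgn F c dv * Bh (rho x (rho z u)) v)) * sgn_sq F a c
    + (sgn F c du * sgn F c dv *
        (Bh (rho (brA x z) u) v
          - sgn F a c * sgn F a c * Bh (rho x (rho z u)) v)) * sgn_sq F a du
    + (sgn F c du * sgn F c dv * sgn F a du * sgn F a du
        * Bh (rho (brA x z) u) v) * sgn_sq F a dv
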